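/- Let S be a finite semigroup and ρ a congruence on S such that S/ρ is Mal'cev nilpotent. Then η* ⊆ ρ. Consequently, η* is the smallest congruence on S whose quotient semigroup is Mal'cev nilpotent. -/

import Mathlib

/-! Common definitions: Mal'cev nilpotency, the relations η_n, η, the congruence η*,
Rees matrix semigroups (with and without zero), regularity, CS-diagonality,
the row relation ~, ideals, principal series and Rees factor isomorphisms. -/

/-- The pair `(λ_n, ρ_n)` of Mal'cev words in a monoid, with `λ₀ = x`, `ρ₀ = y`,
`λ_{k+1} = λ_k * z (k+1) * ρ_k` and `ρ_{k+1} = ρ_k * z (k+1) * λ_k`. -/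
def malcev {M : Type*} [Monoid M] (x y : M) (z : ℕ → M) : ℕ → M × M
  | 0 => (x, y)
  | k + 1 =>
      ((malcev x y z k).1 * z (k + 1) * (malcev x y z k).2,
       (malcev x y z k).2 * z (k + 1) * (malcev x y z k).1)

/-- A semigroup `S` is Mal'cev nilpotent if for some positive `n`,
`λ_n(a,b,c₁,…,c_n) = ρ_n(a,b,c₁,…,c_n)` for all `a b ∈ S` and all `cᵢ ∈ S¹`,
where `S¹ = WithOne S`. -/
def MalcevNilpotent (S : Type*) [Semigroup S] : Prop :=
  ∃ n : ℕ, 0 < n ∧ ∀ (a b : S) (z : ℕ → WithOne S),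
    (malcev (a : WithOne S) (b : WithOne S) z n).1 =
    (malcev (a : WithOne S) (b : WithOne S) z n).2

/-- The relation `η_n` on a semigroup `S`: `η₁` is the diagonal, and for `n > 1`,
`x η_n y` iff there are `z₁, …, z_n ∈ S¹` with `x = λ_n(x,y,z₁,…,z_n)` and
`y = ρ_n(x,y,z₁,…,z_n)`. -/
def etaN (S : Type*) [Semigroup S] (n : ℕ) (x y : S) : Prop :=
  (n = 1 ∧ x = y) ∨
  (1 < n ∧ ∃ z : ℕ → WithOne S,
    (x : WithOne S) = (malcev (x : WithOne S) (y : WithOne S) z n).1 ∧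
    (y : WithOne S) = (malcev (x : WithOne S) (y : WithOne S) z n).2)

/-- `η`, the transitive closure of the union of the relations `η_n`, `n ≥ 1`. -/
def eta (S : Type*) [Semigroup S] : S → S → Prop :=
  Relation.TransGen (fun x y => ∃ n, 1 ≤ n ∧ etaN S n x y)

/-- `η*`, the smallest congruence on `S` containing `η`. -/
def etaStar (S : Type*) [Semigroup S] : Con S :=
  conGen (eta S)

/-- A semigroup is an inverse semigroup if every element has exactly one inverse. -/
def IsInverseSemigroup (S : Type*) [Semigroup S] : Prop :=
  ∀ x : S, ∃! y : S, x * y * x = x ∧ y * x * y = y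

/-- A semigroup is completely regular if every element lies in a subgroup:
for every `a` there is `b` with `aba = a`, `ab = ba` and `bab = b`. -/
def IsCompletelyRegular (S : Type*) [Semigroup S] : Prop :=
  ∀ a : S, ∃ b : S, a * b * a = a ∧ a * b = b * a ∧ b * a * b = b

/-- A (possibly empty) two-sided ideal of a semigroup. -/
def IsIdeal (S : Type*) [Semigroup S] (I : Set S) : Prop :=
  ∀ s : S, ∀ x ∈ I, s * x ∈ I ∧ x * s ∈ I

/-- The Rees matrix semigroup `M⁰(G, n, m; P)` with zero `theta`; the sandwich
matrix entry `P j i : Option G` is `none` when the entry is `θ`. -/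
inductive ReesMatrix (G : Type*) (n m : ℕ) (P : Fin m → Fin n → Option G) where
  | theta : ReesMatrix G n m P
  | elem (g : G) (i : Fin n) (j : Fin m) : ReesMatrix G n m P

namespace ReesMatrix

variable {G : Type*} [Group G] {n m : ℕ} {P : Fin m → Fin n → Option G}

/-- Multiplication: `(g;i,j)(h;k,l) = (g p_{j,k} h; i, l)` if `p_{j,k} ≠ θ`,
and all other products are `θ`. -/
def mul : ReesMatrix G n m P → ReesMatrix G n m P → ReesMatrix G n m P
  | elem g i j, elem h k l =>
      match P j k with
      | some p => elem (g * p * h) i l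
      | none => theta
  | _, _ => theta

instance : Semigroup (ReesMatrix G n m P) where
  mul := mul
  mul_assoc a b c := by
    show mul (mul a b) c = mul a (mul b c)
    rcases a with _ | ⟨g, i, j⟩ <;> rcases b with _ | ⟨h, k, l⟩ <;>
      rcases c with _ | ⟨f, r, s⟩
    all_goals try rfl
    · rcases hjk : P j k with _ | p <;> simp [mul, hjk]
    · rcases hjk : P j k with _ | p <;> rcases hlr : P l r with _ | q <;>
        simp [mul, hjk, hlr, mul_assoc]

theorem mul_def (a b : ReesMatrix G n m P) : a * b = mul a b := rfl

instance [Finite G] : Finite (ReesMatrix G n m P) := by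
  have := Fintype.ofFinite G
  exact Finite.of_surjective
    (fun x : Option (G × Fin n × Fin m) =>
      match x with
      | none => (theta : ReesMatrix G n m P)
      | some (g, i, j) => elem g i j)
    (by rintro (_ | ⟨g, i, j⟩)
        · exact ⟨none, rfl⟩
        · exact ⟨some (g, i, j), rfl⟩)

end ReesMatrix

/-- `P` is regular: every row and every column of the sandwich matrix has a
nonzero entry. -/
def IsRegularSandwich {G : Type*} {n m : ℕ} (P : Fin m → Fin n → Option G) : Prop :=
  (∀ i : Fin n, ∃ j : Fin m, P j i ≠ none) ∧ (∀ j : Fin m, ∃ i : Fin n, P j i ≠ none)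

/-- `P` is CS-diagonal: whenever `p_{r,t}`, `p_{r',t}` and `p_{r,t'}` are all
nonzero, so is `p_{r',t'}`. -/
def IsCSDiagonal {G : Type*} {n m : ℕ} (P : Fin m → Fin n → Option G) : Prop :=
  ∀ (r r' : Fin m) (t t' : Fin n),
    P r t ≠ none → P r' t ≠ none → P r t' ≠ none → P r' t' ≠ none

/-- The relation `~` on rows: `i ~ i'` iff some column `j` has `p_{j,i} ≠ θ`
and `p_{j,i'} ≠ θ`. -/
def rowRel {G : Type*} {n m : ℕ} (P : Fin m → Fin n → Option G) (i i' : Fin n) : Prop :=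
  ∃ j : Fin m, P j i ≠ none ∧ P j i' ≠ none

/-- The completely simple Rees matrix semigroup `M(G, n, m; P)` (without zero),
all sandwich entries lying in `G`. -/
inductive ReesMatrixCS (G : Type*) (n m : ℕ) (P : Fin m → Fin n → G) where
  | elem (g : G) (i : Fin n) (j : Fin m) : ReesMatrixCS G n m P

namespace ReesMatrixCS

variable {G : Type*} [Group G] {n m : ℕ} {P : Fin m → Fin n → G}

instance : Semigroup (ReesMatrixCS G n m P) where
  mul a b := match a, b with
    | elem g i j, elem h k l => elem (g * P j k * h) i l
  mul_assoc a b c := by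
    rcases a with ⟨g, i, j⟩; rcases b with ⟨h, k, l⟩; rcases c with ⟨f, r, s⟩
    show elem _ _ _ = elem _ _ _
    simp [mul_assoc]

instance [Finite G] : Finite (ReesMatrixCS G n m P) := by
  have := Fintype.ofFinite G
  exact Finite.of_surjective
    (fun x : G × Fin n × Fin m => elem x.1 x.2.1 x.2.2)
    (by rintro ⟨g, i, j⟩; exact ⟨(g, i, j), rfl⟩)

end ReesMatrixCS

/-- A principal series of a finite semigroup `S`:
`S = C 1 ⊃ C 2 ⊃ … ⊃ C o ⊃ C (o+1) = ∅`, each `C p` an ideal of `S` with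
no ideal of `S` strictly between consecutive terms. -/
structure PrincipalSeries (S : Type*) [Semigroup S] where
  o : ℕ
  ho : 1 ≤ o
  C : ℕ → Set S
  first : C 1 = Set.univ
  last : C (o + 1) = ∅
  isIdeal : ∀ p, 1 ≤ p → p ≤ o → IsIdeal S (C p)
  strict : ∀ p, 1 ≤ p → p ≤ o → C (p + 1) ⊂ C p
  max : ∀ p, 1 ≤ p → p ≤ o → ∀ I : Set S, IsIdeal S I →
    C (p + 1) ⊆ I → I ⊆ C p → I = C (p + 1) ∨ I = C p

/-- `f` realises the Rees factor `A/B` (the Rees quotient of `A` by the ideal `B`;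
if `B = ∅` the factor is `A` itself) as the Rees matrix semigroup with zero
`M⁰(H, n', m'; Q)`. -/
def IsReesFactorM0 {S : Type*} [Semigroup S] (A B : Set S)
    {H : Type*} [Group H] {n' m' : ℕ} (Q : Fin m' → Fin n' → Option H)
    (f : S → ReesMatrix H n' m' Q) : Prop :=
  (∀ x ∈ A, ∀ y ∈ A, f (x * y) = f x * f y) ∧
  ((B = ∅ ∧ Set.BijOn f A Set.univ) ∨
   (B ≠ ∅ ∧ (∀ x ∈ B, f x = ReesMatrix.theta) ∧
     (∀ x ∈ A \ B, f x ≠ ReesMatrix.theta) ∧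
     Set.InjOn f (A \ B) ∧
     (∀ w : ReesMatrix H n' m' Q, w ≠ ReesMatrix.theta → ∃ x ∈ A \ B, f x = w)))

/-- `f` realises `A` as the completely simple Rees matrix semigroup
`M(H, n', m'; Q)` (without zero). -/
def IsReesFactorCS {S : Type*} [Semigroup S] (A : Set S)
    {H : Type*} [Group H] {n' m' : ℕ} (Q : Fin m' → Fin n' → H)
    (f : S → ReesMatrixCS H n' m' Q) : Prop :=
  (∀ x ∈ A, ∀ y ∈ A, f (x * y) = f x * f y) ∧ Set.BijOn f A Set.univ

/-! If `x = λ_m` and `y = ρ_m`, repeating `z₁, …, z_m` periodically makes `(x, y)` recur at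
every multiple of `m`; in a Mal'cev nilpotent quotient the words eventually agree, so `x ρ y`.
Conversely, in a finite semigroup the pairs `(λ_{jm}, ρ_{jm})` must repeat, and a repeated
pair is `η`-related. Lifting to `S`, this makes every `η_m` trivial on `S/η*`; applied inside
the finite semigroup `S/η*` itself, it makes `λ_k = ρ_k` for some `k` bounded in terms of
`|S/η*|`, which is Mal'cev nilpotency. -/

section PeriodicExt

variable {α : Type*}

-- `i + m - 1` rather than `i - 1`: with truncated subtraction the latter breaks periodicity at `0`.
def periodicExt (m : ℕ) (z : ℕ → α) : ℕ → α := fun i => z ((i + m - 1) % m + 1)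

theorem periodicExt_periodic (m : ℕ) (z : ℕ → α) :
    Function.Periodic (periodicExt m z) m := by
  intro i
  rcases m.eq_zero_or_pos with rfl | hm
  · rfl
  · simp only [periodicExt, show i + m + m - 1 = i + m - 1 + m by omega, Nat.add_mod_right]

theorem periodicExt_apply_of_le (m : ℕ) (z : ℕ → α) {i : ℕ} (h1 : 1 ≤ i) (h2 : i ≤ m) :
    periodicExt m z i = z i := by
  simp only [periodicExt, show i + m - 1 = i - 1 + m by omega, Nat.add_mod_right,
    Nat.mod_eq_of_lt (show i - 1 < m by omega), Nat.sub_add_cancel h1]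

end PeriodicExt

section Malcev

variable {M : Type*} [Monoid M]

theorem malcev_congr (x y : M) {z w : ℕ → M} {k : ℕ}
    (h : ∀ i, 1 ≤ i → i ≤ k → z i = w i) : malcev x y z k = malcev x y w k := by
  induction k with
  | zero => rfl
  | succ k ih =>
    rw [malcev, malcev, ih fun i h1 h2 => h i h1 (by omega), h (k + 1) (by omega) le_rfl]

theorem malcev_add (x y : M) (z : ℕ → M) (k l : ℕ) :
    malcev x y z (k + l) =
      malcev (malcev x y z k).1 (malcev x y z k).2 (fun i => z (k + i)) l := by
  induction l with
  | zero => rfl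
  | succ l ih => rw [← add_assoc, malcev, malcev, ih]; rfl

theorem malcev_map {N : Type*} [Monoid N] (F : M →* N) (x y : M) (z : ℕ → M) (k : ℕ) :
    malcev (F x) (F y) (fun i => F (z i)) k =
      (F (malcev x y z k).1, F (malcev x y z k).2) := by
  induction k with
  | zero => rfl
  | succ k ih => simp only [malcev, ih, map_mul]

theorem malcev_fst_eq_snd_of_le (x y : M) (z : ℕ → M) {k l : ℕ} (hkl : k ≤ l)
    (h : (malcev x y z k).1 = (malcev x y z k).2) :
    (malcev x y z l).1 = (malcev x y z l).2 := by
  induction l, hkl using Nat.le_induction with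
  | base => exact h
  | succ l _ ih => simp only [malcev, ih]

theorem malcev_nat_mul_of_periodic {x y : M} {z : ℕ → M} {m : ℕ}
    (hz : Function.Periodic z m) (hxy : malcev x y z m = (x, y)) (j : ℕ) :
    malcev x y z (j * m) = (x, y) := by
  induction j with
  | zero => rw [zero_mul]; rfl
  | succ j ih =>
    have hshift : (fun i => z (j * m + i)) = z := funext fun i => by
      rw [add_comm]; exact (hz.nat_mul j) i
    rw [add_one_mul, malcev_add, ih, hshift, hxy]

theorem malcev_periodicExt_nat_mul {x y : M} {z : ℕ → M} {m : ℕ}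
    (hxy : malcev x y z m = (x, y)) (j : ℕ) : malcev x y (periodicExt m z) (j * m) = (x, y) := by
  refine malcev_nat_mul_of_periodic (periodicExt_periodic m z) ?_ j
  rw [malcev_congr x y fun i h1 h2 => periodicExt_apply_of_le m z h1 h2, hxy]

end Malcev

theorem WithOne.mapMulHom_surjective {α β : Type*} [Mul α] [Mul β] {f : α →ₙ* β}
    (hf : Function.Surjective f) : Function.Surjective (WithOne.mapMulHom f) := by
  intro w
  induction w using WithOne.recOneCoe with
  | one => exact ⟨1, map_one _⟩
  | coe b =>
    obtain ⟨a, rfl⟩ := hf b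
    exact ⟨a, WithOne.mapMulHom_coe f a⟩

section Eta

variable {S : Type*} [Semigroup S]

theorem exists_malcev_coe_eq (a b : S) (z : ℕ → WithOne S) (k : ℕ) :
    ∃ p : S × S,
      malcev (a : WithOne S) (b : WithOne S) z k = ((p.1 : WithOne S), (p.2 : WithOne S)) := by
  induction k with
  | zero => exact ⟨(a, b), rfl⟩
  | succ k ih =>
    obtain ⟨⟨a', b'⟩, hab⟩ := ih
    rw [malcev, hab]
    induction z (k + 1) using WithOne.recOneCoe with
    | one => exact ⟨(a' * b', b' * a'), by simp only [mul_one, WithOne.coe_mul]⟩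
    | coe s => exact ⟨(a' * s * b', b' * s * a'), by simp only [WithOne.coe_mul]⟩

theorem etaStar_of_etaN {n : ℕ} {x y : S} (h : etaN S n x y) : etaStar S x y := by
  refine ConGen.Rel.of _ _ (Relation.TransGen.single ⟨n, ?_, h⟩)
  rcases h with ⟨rfl, -⟩ | ⟨hn, -⟩ <;> omega

theorem Con.rel_of_etaN (c : Con S) (hc : MalcevNilpotent c.Quotient) {m : ℕ} {x y : S}
    (h : etaN S m x y) : c x y := by
  obtain ⟨n, hn, hnil⟩ := hc
  rcases h with ⟨-, rfl⟩ | ⟨hm, z, hx, hy⟩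
  · exact c.refl x
  set F := WithOne.mapMulHom c.mkMulHom
  have hcycle : malcev (F x) (F y) (fun i => F (z i)) m = (F x, F y) := by
    rw [malcev_map, ← hx, ← hy]
  have hagree := malcev_fst_eq_snd_of_le (F x) (F y) (periodicExt m fun i => F (z i))
    (Nat.le_mul_of_pos_right n (show 0 < m by omega)) (hnil x y _)
  rw [malcev_periodicExt_nat_mul hcycle n] at hagree
  exact c.eq.mp (WithOne.coe_inj.mp hagree)

theorem etaStar_le_of_malcevNilpotent (c : Con S) (hc : MalcevNilpotent c.Quotient) :
    etaStar S ≤ c := by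
  refine Con.conGen_le.mpr fun x y hxy => ?_
  induction hxy with
  | single h => obtain ⟨_, _, h⟩ := h; exact c.rel_of_etaN hc h
  | tail _ h ih => obtain ⟨_, _, h⟩ := h; exact c.trans ih (c.rel_of_etaN hc h)

theorem exists_etaN_malcev_nat_mul [Finite S] (a b : S) (z : ℕ → WithOne S) {m : ℕ}
    (hm : 1 < m) : ∃ j ≤ Nat.card (S × S), ∃ p : S × S,
      malcev (a : WithOne S) (b : WithOne S) z (j * m) = ((p.1 : WithOne S), (p.2 : WithOne S)) ∧
        ∃ n, etaN S n p.1 p.2 := by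
  choose p hp using fun j : ℕ => exists_malcev_coe_eq a b z (j * m)
  obtain ⟨j, l, hjl, hlN, hpjl⟩ :
      ∃ j l : ℕ, j < l ∧ l ≤ Nat.card (S × S) ∧ p j = p l := by
    obtain ⟨j, l, heq, hne⟩ := Function.not_injective_iff.mp fun hinj =>
      (Nat.card_le_card_of_injective (fun j : Fin (Nat.card (S × S) + 1) => p j) hinj).not_gt
        (by simp)
    rcases Fin.lt_or_lt_of_ne hne with h | h
    · exact ⟨j, l, h, by omega, heq⟩
    · exact ⟨l, j, h, by omega, heq.symm⟩
  have hrec := malcev_add (a : WithOne S) b z (j * m) ((l - j) * m)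
  rw [← add_mul, Nat.add_sub_cancel' hjl.le, hp l, hp j, ← hpjl] at hrec
  have hlevel : 1 < (l - j) * m := hm.trans_le (Nat.le_mul_of_pos_left m (by omega))
  exact ⟨j, by omega, p j, hp j, _, Or.inr ⟨hlevel, _, Prod.ext_iff.mp hrec⟩⟩

theorem eq_of_etaN_etaStar_quotient [Finite S] {n : ℕ} {u v : (etaStar S).Quotient}
    (h : etaN (etaStar S).Quotient n u v) : u = v := by
  rcases h with ⟨-, rfl⟩ | ⟨hn, W, hu, hv⟩
  · rfl
  induction u using Con.induction_on with | H x => ?_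
  induction v using Con.induction_on with | H y => ?_
  set F := WithOne.mapMulHom (etaStar S).mkMulHom
  have hF : Function.Surjective F := WithOne.mapMulHom_surjective fun t =>
    Con.induction_on t fun s => ⟨s, rfl⟩
  choose z hz using fun i => hF (W i)
  have hcycle : malcev (F x) (F y) (fun i => F (z i)) n = (F x, F y) := by
    rw [show (fun i => F (z i)) = W from funext hz]
    exact (Prod.ext hu hv).symm
  obtain ⟨j, -, p, hp, k, hk⟩ := exists_etaN_malcev_nat_mul x y (periodicExt n z) hn
  have himg : (F p.1, F p.2) = (F x, F y) := by
    have hmap := malcev_map F x y (periodicExt n z) (j * n)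
    rw [hp] at hmap
    rw [← malcev_periodicExt_nat_mul hcycle j, ← hmap]
    rfl
  obtain ⟨hx, hy⟩ := Prod.ext_iff.mp himg
  calc (x : (etaStar S).Quotient) = p.1 := (WithOne.coe_inj.mp hx).symm
    _ = p.2 := (etaStar S).eq.mpr (etaStar_of_etaN hk)
    _ = y := WithOne.coe_inj.mp hy

theorem malcevNilpotent_etaStar_quotient [Finite S] :
    MalcevNilpotent (etaStar S).Quotient := by
  have : Finite (etaStar S).Quotient := Quotient.finite _
  refine ⟨2 * Nat.card ((etaStar S).Quotient × (etaStar S).Quotient) + 1, by omega,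
    fun a b w => ?_⟩
  -- Steps of two, since `η₁` is only the diagonal.
  obtain ⟨j, hj, p, hp, n, hn⟩ := exists_etaN_malcev_nat_mul a b w one_lt_two
  refine malcev_fst_eq_snd_of_le _ _ w (show j * 2 ≤ _ by omega) ?_
  rw [hp, eq_of_etaN_etaStar_quotient hn]

end Eta

/-- If `ρ` is a congruence on a finite semigroup `S` with `S/ρ`
Mal'cev nilpotent, then `η* ⊆ ρ`; consequently `η*` is the least congruence
whose quotient is Mal'cev nilpotent. -/
theorem etaStar_le_of_malcevNilpotent_quotient (S : Type*) [Semigroup S] [Finite S]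
    (ρ : Con S) (h : MalcevNilpotent ρ.Quotient) :
    etaStar S ≤ ρ ∧
      IsLeast {c : Con S | MalcevNilpotent c.Quotient} (etaStar S) :=
  ⟨etaStar_le_of_malcevNilpotent ρ h, malcevNilpotent_etaStar_quotient,
    fun c hc => etaStar_le_of_malcevNilpotent c hc⟩
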